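/- arXiv:1701.01672 — 2 statements merged into one kernel-verified Lean document; each statement's English description precedes it below -/
import Mathlib

section
/- Let τ = (τ_1,…,τ_k) be a changepoint vector in T_s for some integer 1 ≤ s < n. If τ ∉ T*_s (i.e., there is no φ ∈ ℝ with f^s(φ) = f_τ^s(φ)), then for every integer t with s < t ≤ n the concatenated vector (τ, s) = (τ_1,…,τ_k, s) satisfies (τ, s) ∉ T*_t; that is, there is no φ ∈ ℝ with f^t(φ) = f_{(τ,s)}^t(φ). -/
open Finset

/-- Segment cost `C(s,t,φ,ψ)`: cost of fitting data `y_{s+1:t}` with a linear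
function taking value `φ` at time `s` and value `ψ` at time `t`. -/
noncomputable def segCost (y : ℕ → ℝ) (σ : ℝ) (s t : ℕ) (φ ψ : ℝ) : ℝ :=
  (1 / σ ^ 2) * ∑ j ∈ Finset.Icc (s + 1) t,
    (y j - φ - ((ψ - φ) / ((t : ℝ) - (s : ℝ))) * ((j : ℝ) - (s : ℝ))) ^ 2

/-- `ValidCP t τ` : `τ` is a (possibly empty) strictly increasing vector of
changepoints `0 < τ₁ < ⋯ < τ_k < t`, i.e. an element of `T_t`. -/
def ValidCP (t : ℕ) (τ : List ℕ) : Prop :=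
  τ.Chain' (· < ·) ∧ ∀ x ∈ τ, 0 < x ∧ x < t

/-- Penalised cost of segmenting `y_{1:t}` with changepoints `τ = (τ₁,…,τ_k)`,
fitted values `φs 0, …, φs k` at times `0, τ₁, …, τ_k`, and fitted value `φ` at time `t`. -/
noncomputable def segTotal (y : ℕ → ℝ) (σ β : ℝ) (h : ℕ → ℝ) (t : ℕ)
    (τ : List ℕ) (φs : ℕ → ℝ) (φ : ℝ) : ℝ :=
  let p : ℕ → ℕ := fun i => (0 :: τ).getD i 0
  (∑ i ∈ Finset.range τ.length,
      (segCost y σ (p i) (p (i + 1)) (φs i) (φs (i + 1)) + h (p (i + 1) - p i)))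
    + segCost y σ (p τ.length) t (φs τ.length) φ + h (t - p τ.length)
    + β * ((τ.length : ℝ) + 1)

/-- `f_τ^t(φ)` : minimum penalised cost of segmenting `y_{1:t}` with changepoints `τ`
and fitted value `φ` at time `t`, minimised over the fitted values at the changepoints. -/
noncomputable def fseg (y : ℕ → ℝ) (σ β : ℝ) (h : ℕ → ℝ) (t : ℕ)
    (τ : List ℕ) (φ : ℝ) : ℝ :=
  ⨅ φs : ℕ → ℝ, segTotal y σ β h t τ φs φ

/-- `f^t(φ)` : minimum penalised cost of segmenting `y_{1:t}` with fitted value `φ`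
at time `t`, minimised over all changepoint vectors in `T_t`; `f^0 ≡ 0`. -/
noncomputable def fDP (y : ℕ → ℝ) (σ β : ℝ) (h : ℕ → ℝ) (t : ℕ) (φ : ℝ) : ℝ :=
  if t = 0 then 0 else ⨅ τ : {τ : List ℕ // ValidCP t τ}, fseg y σ β h t τ.1 φ

/-! Appending `s` to `τ` gives
`f_{(τ,s)}^t(φ) = min_{φ'} (f_τ^s(φ') + C(s,t,φ',φ)) + h(t-s) + β`, while
`f^t(φ) ≤ f^s(φ') + C(s,t,φ',φ) + h(t-s) + β` for every `φ'`. The minimum over `φ'` is attained: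
`f_τ^s` is a partial infimum of a jointly convex function, hence convex and continuous, and it
grows like `(y_s - φ')² / σ²`. At the minimiser `f^s < f_τ^s`, so `f^t(φ) < f_{(τ,s)}^t(φ)`. -/

open Filter

lemma sq_comb_le {a b x z : ℝ} (ha : 0 ≤ a) (hb : 0 ≤ b) (hab : a + b = 1) :
    (a * x + b * z) ^ 2 ≤ a * x ^ 2 + b * z ^ 2 := by
  nlinarith [mul_nonneg (mul_nonneg ha hb) (sq_nonneg (x - z))]

lemma tendsto_mul_sub_sq_add_cocompact {a : ℝ} (ha : 0 < a) (m K : ℝ) :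
    Tendsto (fun x : ℝ => a * (m - x) ^ 2 + K) (cocompact ℝ) atTop := by
  have hnorm : Tendsto (fun x : ℝ => ‖x - m‖) (cocompact ℝ) atTop :=
    tendsto_norm_cocompact_atTop.comp (Homeomorph.subRight m).isClosedEmbedding.tendsto_cocompact
  have hsq := ((tendsto_pow_atTop two_ne_zero).comp hnorm).const_mul_atTop ha
  refine tendsto_atTop_add_const_right _ K (hsq.congr fun x => ?_)
  simp only [Function.comp_apply, Real.norm_eq_abs, sq_abs]
  ring

lemma convexOn_iInf_of_convexOn_prod {E : Type*} [AddCommGroup E] [Module ℝ E]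
    {F : E → ℝ → ℝ} (hF : ConvexOn ℝ Set.univ fun p : E × ℝ => F p.1 p.2)
    (hbdd : ∀ x, BddBelow (Set.range fun u => F u x)) :
    ConvexOn ℝ Set.univ fun x => ⨅ u, F u x := by
  refine ⟨convex_univ, fun x _ z _ a b ha hb hab => ?_⟩
  simp only [smul_eq_mul]
  rw [Real.mul_iInf_of_nonneg ha, Real.mul_iInf_of_nonneg hb]
  refine le_ciInf_add_ciInf fun u v => (ciInf_le (hbdd _) (a • u + b • v)).trans ?_
  simpa using hF.2 (x := (u, x)) (y := (v, z)) trivial trivial ha hb hab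

lemma segCost_nonneg (y : ℕ → ℝ) (σ : ℝ) (s t : ℕ) (φ ψ : ℝ) : 0 ≤ segCost y σ s t φ ψ :=
  mul_nonneg (by positivity) (sum_nonneg fun _ _ => sq_nonneg _)

lemma continuous_segCost_left (y : ℕ → ℝ) (σ : ℝ) (s t : ℕ) (ψ : ℝ) :
    Continuous fun φ => segCost y σ s t φ ψ := by
  unfold segCost
  fun_prop

lemma mul_sq_le_segCost (y : ℕ → ℝ) (σ : ℝ) {s t : ℕ} (hst : s < t) (φ ψ : ℝ) :
    1 / σ ^ 2 * (y t - ψ) ^ 2 ≤ segCost y σ s t φ ψ := by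
  have hts : ((t : ℝ) - s) ≠ 0 := sub_ne_zero.2 (by exact_mod_cast hst.ne')
  refine mul_le_mul_of_nonneg_left ?_ (by positivity)
  refine le_of_eq_of_le ?_ (single_le_sum (fun j _ => sq_nonneg
    (y j - φ - (ψ - φ) / ((t : ℝ) - s) * ((j : ℝ) - s))) (mem_Icc.2 ⟨hst, le_rfl⟩))
  rw [div_mul_cancel₀ _ hts]
  ring

lemma segCost_comb_le (y : ℕ → ℝ) (σ : ℝ) (s t : ℕ) {a b : ℝ} (ha : 0 ≤ a) (hb : 0 ≤ b)
    (hab : a + b = 1) (φ₁ ψ₁ φ₂ ψ₂ : ℝ) :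
    segCost y σ s t (a * φ₁ + b * φ₂) (a * ψ₁ + b * ψ₂)
      ≤ a * segCost y σ s t φ₁ ψ₁ + b * segCost y σ s t φ₂ ψ₂ := by
  set r : ℝ → ℝ → ℕ → ℝ := fun φ ψ j => y j - φ - (ψ - φ) / ((t : ℝ) - s) * ((j : ℝ) - s)
  have hr : ∀ j, r (a * φ₁ + b * φ₂) (a * ψ₁ + b * ψ₂) j = a * r φ₁ ψ₁ j + b * r φ₂ ψ₂ j := by
    intro j
    simp only [r]
    linear_combination (-(y j)) * hab
  calc segCost y σ s t (a * φ₁ + b * φ₂) (a * ψ₁ + b * ψ₂)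
      = 1 / σ ^ 2 * ∑ j ∈ Icc (s + 1) t, (a * r φ₁ ψ₁ j + b * r φ₂ ψ₂ j) ^ 2 := by
        simp only [← hr]
        rfl
    _ ≤ 1 / σ ^ 2 * ∑ j ∈ Icc (s + 1) t, (a * r φ₁ ψ₁ j ^ 2 + b * r φ₂ ψ₂ j ^ 2) :=
        mul_le_mul_of_nonneg_left (sum_le_sum fun j _ => sq_comb_le ha hb hab) (by positivity)
    _ = a * segCost y σ s t φ₁ ψ₁ + b * segCost y σ s t φ₂ ψ₂ := by
        simp only [segCost, sum_add_distrib, ← mul_sum, r]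
        ring

-- `knot τ i` is the paper's `τ_i`, with `τ_0 = 0`.
def knot (τ : List ℕ) (i : ℕ) : ℕ := (0 :: τ).getD i 0

noncomputable def segFit (y : ℕ → ℝ) (σ : ℝ) (t : ℕ) (τ : List ℕ) (φs : ℕ → ℝ) (φ : ℝ) : ℝ :=
  (∑ i ∈ range τ.length, segCost y σ (knot τ i) (knot τ (i + 1)) (φs i) (φs (i + 1)))
    + segCost y σ (knot τ τ.length) t (φs τ.length) φ

noncomputable def segPenalty (β : ℝ) (h : ℕ → ℝ) (t : ℕ) (τ : List ℕ) : ℝ :=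
  (∑ i ∈ range τ.length, h (knot τ (i + 1) - knot τ i)) + h (t - knot τ τ.length)
    + β * ((τ.length : ℝ) + 1)

lemma segTotal_eq_segFit_add_segPenalty (y : ℕ → ℝ) (σ β : ℝ) (h : ℕ → ℝ) (t : ℕ)
    (τ : List ℕ) (φs : ℕ → ℝ) (φ : ℝ) :
    segTotal y σ β h t τ φs φ = segFit y σ t τ φs φ + segPenalty β h t τ := by
  simp only [segTotal, segFit, segPenalty, knot, sum_add_distrib]
  ring

lemma segFit_nonneg (y : ℕ → ℝ) (σ : ℝ) (t : ℕ) (τ : List ℕ) (φs : ℕ → ℝ) (φ : ℝ) :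
    0 ≤ segFit y σ t τ φs φ :=
  add_nonneg (sum_nonneg fun _ _ => segCost_nonneg ..) (segCost_nonneg ..)

lemma knot_length_lt {t : ℕ} {τ : List ℕ} (ht : 0 < t) (hτ : ValidCP t τ) :
    knot τ τ.length < t := by
  have hmem : knot τ τ.length ∈ 0 :: τ := by
    rw [knot, List.getD_eq_getElem _ _ (by simp)]
    exact List.getElem_mem _
  rcases List.mem_cons.1 hmem with h0 | hτmem
  · rwa [h0]
  · exact (hτ.2 _ hτmem).2

lemma mul_sq_le_segFit (y : ℕ → ℝ) (σ : ℝ) {t : ℕ} {τ : List ℕ} (ht : 0 < t)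
    (hτ : ValidCP t τ) (φs : ℕ → ℝ) (φ : ℝ) :
    1 / σ ^ 2 * (y t - φ) ^ 2 ≤ segFit y σ t τ φs φ :=
  (mul_sq_le_segCost y σ (knot_length_lt ht hτ) _ φ).trans
    (le_add_of_nonneg_left (sum_nonneg fun _ _ => segCost_nonneg ..))

lemma segFit_comb_le (y : ℕ → ℝ) (σ : ℝ) (t : ℕ) (τ : List ℕ) {a b : ℝ} (ha : 0 ≤ a)
    (hb : 0 ≤ b) (hab : a + b = 1) (φs₁ φs₂ : ℕ → ℝ) (φ₁ φ₂ : ℝ) :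
    segFit y σ t τ (fun i => a * φs₁ i + b * φs₂ i) (a * φ₁ + b * φ₂)
      ≤ a * segFit y σ t τ φs₁ φ₁ + b * segFit y σ t τ φs₂ φ₂ := by
  have hsum := sum_le_sum fun i (_ : i ∈ range τ.length) => segCost_comb_le y σ
    (knot τ i) (knot τ (i + 1)) ha hb hab (φs₁ i) (φs₁ (i + 1)) (φs₂ i) (φs₂ (i + 1))
  have hlast := segCost_comb_le y σ (knot τ τ.length) t ha hb hab
    (φs₁ τ.length) φ₁ (φs₂ τ.length) φ₂
  simp only [segFit, mul_add, mul_sum, sum_add_distrib] at hsum ⊢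
  linarith

lemma knot_append_of_le (τ : List ℕ) (s : ℕ) {i : ℕ} (hi : i ≤ τ.length) :
    knot (τ ++ [s]) i = knot τ i := by
  rw [knot, ← List.cons_append, List.getD_append _ _ _ _ (by simp; omega), knot]

lemma knot_append_length_succ (τ : List ℕ) (s : ℕ) : knot (τ ++ [s]) (τ.length + 1) = s := by
  rw [knot, ← List.cons_append, List.getD_append_right _ _ _ _ (by simp)]
  simp

lemma validCP_append {s t : ℕ} {τ : List ℕ} (hs : 0 < s) (hst : s < t) (hτ : ValidCP s τ) :
    ValidCP t (τ ++ [s]) := by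
  refine ⟨List.isChain_append.2 ⟨hτ.1, List.isChain_singleton s, ?_⟩, ?_⟩
  · intro x hx _ hs'
    obtain rfl : s = _ := Option.some.inj hs'
    exact (hτ.2 x (List.mem_of_getLast? hx)).2
  · simp only [List.mem_append, List.mem_singleton]
    rintro x (hx | rfl)
    exacts [⟨(hτ.2 x hx).1, (hτ.2 x hx).2.trans hst⟩, ⟨hs, hst⟩]

/-- A strictly increasing list is determined by its set of entries. -/
instance finite_validCP (t : ℕ) : Finite {τ : List ℕ // ValidCP t τ} := by
  have hsub : ∀ τ : {τ : List ℕ // ValidCP t τ}, τ.1.toFinset ∈ (range t).powerset := fun τ =>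
    mem_powerset.2 fun x hx => mem_range.2 (τ.2.2 x (List.mem_toFinset.1 hx)).2
  refine Finite.of_injective (fun τ => (⟨τ.1.toFinset, hsub τ⟩ : (range t).powerset)) ?_
  rintro ⟨τ₁, h₁⟩ ⟨τ₂, h₂⟩ he
  have s₁ := List.isChain_iff_pairwise.1 h₁.1
  have s₂ := List.isChain_iff_pairwise.1 h₂.1
  exact Subtype.ext <| List.Perm.eq_of_pairwise (fun _ _ _ _ hab hba => absurd (hab.trans hba)
    (lt_irrefl _)) s₁ s₂ (List.perm_of_nodup_nodup_toFinset_eq s₁.nodup s₂.nodup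
    (congrArg Subtype.val he))

instance nonempty_validCP (t : ℕ) : Nonempty {τ : List ℕ // ValidCP t τ} :=
  ⟨⟨[], List.isChain_nil, by simp⟩⟩

section
variable (y : ℕ → ℝ) (σ β : ℝ) (h : ℕ → ℝ)

lemma bddBelow_range_segTotal (t : ℕ) (τ : List ℕ) (φ : ℝ) :
    BddBelow (Set.range fun φs => segTotal y σ β h t τ φs φ) :=
  ⟨segPenalty β h t τ, Set.forall_mem_range.2 fun φs => by
    rw [segTotal_eq_segFit_add_segPenalty]
    linarith [segFit_nonneg y σ t τ φs φ]⟩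

lemma fseg_le_segTotal (t : ℕ) (τ : List ℕ) (φs : ℕ → ℝ) (φ : ℝ) :
    fseg y σ β h t τ φ ≤ segTotal y σ β h t τ φs φ :=
  ciInf_le (bddBelow_range_segTotal y σ β h t τ φ) φs

lemma mul_sq_add_segPenalty_le_fseg {t : ℕ} {τ : List ℕ} (ht : 0 < t) (hτ : ValidCP t τ)
    (φ : ℝ) : 1 / σ ^ 2 * (y t - φ) ^ 2 + segPenalty β h t τ ≤ fseg y σ β h t τ φ :=
  le_ciInf fun φs => by
    rw [segTotal_eq_segFit_add_segPenalty]
    linarith [mul_sq_le_segFit y σ ht hτ φs φ]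

lemma convexOn_fseg (t : ℕ) (τ : List ℕ) : ConvexOn ℝ Set.univ (fseg y σ β h t τ) := by
  refine convexOn_iInf_of_convexOn_prod ⟨convex_univ, fun p _ q _ a b ha hb hab => ?_⟩
    (bddBelow_range_segTotal y σ β h t τ)
  simp only [segTotal_eq_segFit_add_segPenalty, Prod.fst_add, Prod.snd_add, Prod.smul_fst,
    Prod.smul_snd, smul_eq_mul]
  have := segFit_comb_le y σ t τ ha hb hab p.1 q.1 p.2 q.2
  linear_combination this - segPenalty β h t τ * hab

lemma continuous_fseg (t : ℕ) (τ : List ℕ) : Continuous (fseg y σ β h t τ) :=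
  continuousOn_univ.1 ((convexOn_fseg y σ β h t τ).continuousOn isOpen_univ)

lemma segTotal_congr {t : ℕ} {τ : List ℕ} {φs φs' : ℕ → ℝ}
    (he : ∀ i ≤ τ.length, φs i = φs' i) (φ : ℝ) :
    segTotal y σ β h t τ φs φ = segTotal y σ β h t τ φs' φ := by
  simp (disch := (simp only [mem_range] at *; omega)) only [segTotal_eq_segFit_add_segPenalty,
    segFit, he]
  rw [he _ le_rfl]

lemma segTotal_append (s t : ℕ) (τ : List ℕ) (φs : ℕ → ℝ) (φ : ℝ) :
    segTotal y σ β h t (τ ++ [s]) φs φ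
      = segTotal y σ β h s τ φs (φs (τ.length + 1))
        + segCost y σ s t (φs (τ.length + 1)) φ + (h (t - s) + β) := by
  simp (disch := (simp only [mem_range] at *; omega)) only [segTotal_eq_segFit_add_segPenalty,
    segFit, segPenalty, List.length_append, List.length_singleton, sum_range_succ,
    knot_append_length_succ, knot_append_of_le]
  push_cast
  ring

lemma fseg_append_le (s t : ℕ) (τ : List ℕ) (φ' φ : ℝ) :
    fseg y σ β h t (τ ++ [s]) φ
      ≤ fseg y σ β h s τ φ' + segCost y σ s t φ' φ + (h (t - s) + β) := by
  have hle : ∀ φs, fseg y σ β h t (τ ++ [s]) φ - (segCost y σ s t φ' φ + (h (t - s) + β))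
      ≤ segTotal y σ β h s τ φs φ' := fun φs => by
    have := fseg_le_segTotal y σ β h t (τ ++ [s]) (Function.update φs (τ.length + 1) φ') φ
    rw [segTotal_append, Function.update_self,
      segTotal_congr y σ β h (fun i hi => Function.update_of_ne (by omega) _ _)] at this
    linarith
  have hinf : _ ≤ fseg y σ β h s τ φ' := le_ciInf hle
  linarith

lemma le_fseg_append {s t : ℕ} {τ : List ℕ} {φ m : ℝ}
    (hm : ∀ φ', m ≤ fseg y σ β h s τ φ' + segCost y σ s t φ' φ) :
    m + (h (t - s) + β) ≤ fseg y σ β h t (τ ++ [s]) φ :=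
  le_ciInf fun φs => by
    rw [segTotal_append]
    linarith [hm (φs (τ.length + 1)), fseg_le_segTotal y σ β h s τ φs (φs (τ.length + 1))]

lemma fDP_le_fseg {t : ℕ} {τ : List ℕ} (ht : 0 < t) (hτ : ValidCP t τ) (φ : ℝ) :
    fDP y σ β h t φ ≤ fseg y σ β h t τ φ := by
  rw [fDP, if_neg ht.ne']
  exact ciInf_le (Set.finite_range _).bddBelow (⟨τ, hτ⟩ : {τ // ValidCP t τ})

lemma fDP_le_fDP_add_segCost {s t : ℕ} (hs : 0 < s) (hst : s < t) (φ' φ : ℝ) :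
    fDP y σ β h t φ ≤ fDP y σ β h s φ' + segCost y σ s t φ' φ + (h (t - s) + β) := by
  have hle : ∀ τ : {τ // ValidCP s τ},
      fDP y σ β h t φ - (segCost y σ s t φ' φ + (h (t - s) + β)) ≤ fseg y σ β h s τ.1 φ' :=
    fun τ => by
      linarith [fDP_le_fseg y σ β h (hs.trans hst) (validCP_append hs hst τ.2) φ,
        fseg_append_le y σ β h s t τ.1 φ' φ]
  have hinf : fDP y σ β h t φ - (segCost y σ s t φ' φ + (h (t - s) + β))
      ≤ fDP y σ β h s φ' :=
    (le_ciInf hle).trans_eq (if_neg hs.ne').symm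
  linarith

lemma exists_forall_fseg_add_segCost_le (hσ : σ ≠ 0) {s : ℕ} {τ : List ℕ} (hs : 0 < s)
    (hτ : ValidCP s τ) (t : ℕ) (φ : ℝ) :
    ∃ φ₀, ∀ φ', fseg y σ β h s τ φ₀ + segCost y σ s t φ₀ φ
      ≤ fseg y σ β h s τ φ' + segCost y σ s t φ' φ := by
  refine ((continuous_fseg y σ β h s τ).add (continuous_segCost_left y σ s t φ)).exists_forall_le
    (tendsto_atTop_mono (fun φ' => ?_)
      (tendsto_mul_sub_sq_add_cocompact (by positivity : 0 < 1 / σ ^ 2) (y s)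
        (segPenalty β h s τ)))
  show _ ≤ fseg y σ β h s τ φ' + segCost y σ s t φ' φ
  linarith [mul_sq_add_segPenalty_le_fseg y σ β h hs hτ φ', segCost_nonneg y σ s t φ' φ]

end

theorem statement0_general (n : ℕ) (y : ℕ → ℝ) (σ : ℝ) (hσ : 0 < σ)
    (β : ℝ) (h : ℕ → ℝ)
    (s : ℕ) (hs1 : 1 ≤ s)
    (τ : List ℕ) (hτ : ValidCP s τ)
    (hnotopt : ¬ ∃ φ : ℝ, fDP y σ β h s φ = fseg y σ β h s τ φ) :
    ∀ t : ℕ, s < t → t ≤ n →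
      ¬ ∃ φ : ℝ, fDP y σ β h t φ = fseg y σ β h t (τ ++ [s]) φ := by
  rintro t hst - ⟨φ, hopt⟩
  obtain ⟨φ₀, hφ₀⟩ := exists_forall_fseg_add_segCost_le y σ β h hσ.ne' hs1 hτ t φ
  have hgap : fDP y σ β h s φ₀ < fseg y σ β h s τ φ₀ :=
    (fDP_le_fseg y σ β h hs1 hτ φ₀).lt_of_ne fun he => hnotopt ⟨φ₀, he⟩
  linarith [le_fseg_append y σ β h hφ₀, fDP_le_fDP_add_segCost y σ β h hs1 hst φ₀ φ]

/-- Theorem 1 of the paper, functional pruning: if `τ ∈ T_s` is not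
functionally optimal at time `s` (no `φ` with `f^s(φ) = f_τ^s(φ)`), then for every
`t` with `s < t ≤ n` the concatenation `(τ, s)` is not functionally optimal at time `t`. -/
theorem statement0 (n : ℕ) (hn : 1 ≤ n) (y : ℕ → ℝ) (σ : ℝ) (hσ : 0 < σ)
    (β : ℝ) (hβ : 0 < β) (h : ℕ → ℝ)
    (s : ℕ) (hs1 : 1 ≤ s) (hsn : s < n)
    (τ : List ℕ) (hτ : ValidCP s τ)
    (hnotopt : ¬ ∃ φ : ℝ, fDP y σ β h s φ = fseg y σ β h s τ φ) :
    ∀ t : ℕ, s < t → t ≤ n →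
      ¬ ∃ φ : ℝ, fDP y σ β h t φ = fseg y σ β h t (τ ++ [s]) φ :=
  statement0_general n y σ hσ β h s hs1 τ hτ hnotopt
end

section
/- Strict convexity of the segment cost: for integers 0 ≤ s < t ≤ n with t − s ≥ 2, the function (φ, ψ) ↦ C(s,t,φ,ψ) from ℝ² to ℝ is strictly convex. -/
open Finset

/-! The cost is `σ⁻²` times a sum of squares of residuals, each an affine function of `(φ, ψ)`.
Along a segment an affine residual `r` satisfies
`r(a x + b y)² = a r(x)² + b r(y)² - a b (r(x) - r(y))²`, so a sum of squared affine maps is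
strictly convex as soon as the maps jointly separate points. The residuals at `j = s + 1` and
`j = t` weight `(φ, ψ)` by `(1 - 1/(t-s), 1/(t-s))` and `(0, 1)`, which are linearly independent
exactly when `t - s ≥ 2`. -/

theorem StrictConvexOn.const_mul {E : Type*} [AddCommGroup E] [Module ℝ E] {s : Set E}
    {f : E → ℝ} {c : ℝ} (hc : 0 < c) (hf : StrictConvexOn ℝ s f) :
    StrictConvexOn ℝ s fun x => c * f x := by
  refine ⟨hf.1, fun x hx y hy hxy a b ha hb hab => ?_⟩
  have := mul_lt_mul_of_pos_left (hf.2 hx hy hxy ha hb hab) hc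
  simp only [smul_eq_mul] at this ⊢
  linarith

theorem strictConvexOn_univ_sum_sq {E ι : Type*} [AddCommGroup E] [Module ℝ E]
    (S : Finset ι) (f : ι → E →ᵃ[ℝ] ℝ) (hf : ∀ x y, x ≠ y → ∃ i ∈ S, f i x ≠ f i y) :
    StrictConvexOn ℝ Set.univ fun x => ∑ i ∈ S, f i x ^ 2 := by
  refine ⟨convex_univ, fun x _ y _ hxy a b ha hb hab => ?_⟩
  have hcombo : ∀ i, f i (a • x + b • y) ^ 2
      = a * f i x ^ 2 + b * f i y ^ 2 - a * b * (f i x - f i y) ^ 2 := by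
    intro i
    rw [Convex.combo_affine_apply hab, smul_eq_mul, smul_eq_mul]
    linear_combination (a * f i x ^ 2 + b * f i y ^ 2) * hab
  obtain ⟨i, hi, hne⟩ := hf x y hxy
  have hgap : 0 < ∑ i ∈ S, (f i x - f i y) ^ 2 :=
    sum_pos' (fun _ _ => sq_nonneg _) ⟨i, hi, by positivity [sub_ne_zero.2 hne]⟩
  simp only [smul_eq_mul, sum_congr rfl fun i _ => hcombo i, sum_sub_distrib, sum_add_distrib,
    ← mul_sum]
  nlinarith [mul_pos (mul_pos ha hb) hgap]

noncomputable def segResidual (y : ℕ → ℝ) (s t j : ℕ) : ℝ × ℝ →ᵃ[ℝ] ℝ :=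
  let w : ℝ := ((j : ℝ) - s) / ((t : ℝ) - s)
  AffineMap.const ℝ (ℝ × ℝ) (y j) -
    ((1 - w) • LinearMap.fst ℝ ℝ ℝ + w • LinearMap.snd ℝ ℝ ℝ).toAffineMap

theorem segResidual_apply (y : ℕ → ℝ) {s t : ℕ} (hst : s < t) (j : ℕ) (p : ℝ × ℝ) :
    segResidual y s t j p = y j - p.1 - (p.2 - p.1) / ((t : ℝ) - s) * ((j : ℝ) - s) := by
  have hd : (t : ℝ) - s ≠ 0 := sub_ne_zero.2 (by exact_mod_cast hst.ne')
  simp only [segResidual, AffineMap.coe_sub, AffineMap.coe_const, LinearMap.coe_toAffineMap,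
    Pi.sub_apply, Function.const_apply, LinearMap.add_apply, LinearMap.smul_apply,
    LinearMap.fst_apply, LinearMap.snd_apply, smul_eq_mul]
  field_simp
  ring

theorem segCost_eq_sum_sq (y : ℕ → ℝ) (σ : ℝ) {s t : ℕ} (hst : s < t) (p : ℝ × ℝ) :
    segCost y σ s t p.1 p.2 = 1 / σ ^ 2 * ∑ j ∈ Icc (s + 1) t, segResidual y s t j p ^ 2 := by
  simp only [segCost, segResidual_apply y hst]

theorem segResidual_separates (y : ℕ → ℝ) {s t : ℕ} (hst : s + 2 ≤ t) {p q : ℝ × ℝ}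
    (hpq : p ≠ q) : ∃ j ∈ Icc (s + 1) t, segResidual y s t j p ≠ segResidual y s t j q := by
  by_contra! h
  have hd : (2 : ℝ) ≤ (t : ℝ) - s := by
    rw [le_sub_iff_add_le']; exact_mod_cast hst
  have hd0 : (t : ℝ) - s ≠ 0 := by linarith
  have hfirst := h (s + 1) (mem_Icc.2 ⟨le_rfl, by omega⟩)
  have hlast := h t (mem_Icc.2 ⟨by omega, le_rfl⟩)
  simp only [segResidual_apply y (show s < t by omega)] at hfirst hlast
  simp only [div_mul_cancel₀ _ hd0] at hlast
  have h2 : p.2 = q.2 := by linarith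
  rw [h2] at hfirst
  push_cast at hfirst
  field_simp at hfirst
  have hprod : (p.1 - q.1) * ((t - s : ℝ) - 1) = 0 := by linarith
  have h1 : p.1 = q.1 :=
    sub_eq_zero.1 ((mul_eq_zero.1 hprod).resolve_right (by linarith))
  exact hpq (Prod.ext h1 h2)

theorem statement14_general (y : ℕ → ℝ) (σ : ℝ) (hσ : 0 < σ)
    (s t : ℕ) (hst : s + 2 ≤ t) :
    StrictConvexOn ℝ Set.univ (fun p : ℝ × ℝ => segCost y σ s t p.1 p.2) := by
  have hsq := strictConvexOn_univ_sum_sq (Icc (s + 1) t) (segResidual y s t)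
    fun _ _ => segResidual_separates y hst
  simpa only [segCost_eq_sum_sq y σ (show s < t by omega)] using
    hsq.const_mul (one_div_pos.2 (pow_pos hσ 2))

/-- strict convexity of the segment cost: for `t - s ≥ 2`,
`(φ, ψ) ↦ C(s,t,φ,ψ)` is strictly convex on `ℝ²`. -/
theorem statement14 (n : ℕ) (hn : 1 ≤ n) (y : ℕ → ℝ) (σ : ℝ) (hσ : 0 < σ)
    (s t : ℕ) (hst : s + 2 ≤ t) (htn : t ≤ n) :
    StrictConvexOn ℝ Set.univ (fun p : ℝ × ℝ => segCost y σ s t p.1 p.2) :=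
  statement14_general y σ hσ s t hst
end
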